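/- Let a, b, s be real numbers with 0 ≤ a < b, 0 < s, and 2·s·b ≤ b − a. Define the sequence θ : ℕ → ℝ by θ 1 = b and θ (k+1) = ((θ k − a)·θ k·(1 − s) + (b − θ k)·θ k·(1 + s))/(b − a). Then (a + b)/2 ≤ θ k ≤ b for every k ≥ 1. -/

import Mathlib

/-!
With `m = (a + b) / 2` the update map `f = vuStep a b s` of the threshold can be written as
`f θ = θ - s θ (2θ - (a + b)) / (b - a)` and as `f θ - m = (θ - m) (1 - 2 s θ / (b - a))`.
On `[m, b]` (where `θ ≥ m ≥ 0`) the first form gives `f θ ≤ θ ≤ b`, and the second gives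
`f θ ≥ m` because `2 s θ ≤ 2 s b ≤ b - a`. So `f` maps `[m, b]` into itself, and the sequence,
which starts at `b`, never leaves it.
-/

open Set

noncomputable def vuStep (a b s θ : ℝ) : ℝ :=
  ((θ - a) * θ * (1 - s) + (b - θ) * θ * (1 + s)) / (b - a)

section

variable {a b s x : ℝ}

lemma vuStep_eq_sub (hab : a < b) :
    vuStep a b s x = x - s * x * (2 * x - (a + b)) / (b - a) := by
  have : b - a ≠ 0 := (sub_pos.mpr hab).ne'
  unfold vuStep
  field_simp
  ring

lemma vuStep_sub_midpoint (hab : a < b) :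
    vuStep a b s x - (a + b) / 2 = (x - (a + b) / 2) * (1 - 2 * s * x / (b - a)) := by
  have : b - a ≠ 0 := (sub_pos.mpr hab).ne'
  unfold vuStep
  field_simp
  ring

lemma vuStep_le_self (hab : a < b) (hs : 0 ≤ s) (hx₀ : 0 ≤ x) (hx : (a + b) / 2 ≤ x) :
    vuStep a b s x ≤ x := by
  rw [vuStep_eq_sub hab, sub_le_self_iff]
  have : 0 ≤ 2 * x - (a + b) := by linarith
  exact div_nonneg (by positivity) (sub_pos.mpr hab).le

lemma midpoint_le_vuStep (hab : a < b) (hx : (a + b) / 2 ≤ x) (hsx : 2 * s * x ≤ b - a) :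
    (a + b) / 2 ≤ vuStep a b s x := by
  rw [← sub_nonneg, vuStep_sub_midpoint hab]
  refine mul_nonneg (sub_nonneg.mpr hx) (sub_nonneg.mpr ?_)
  exact (div_le_one (sub_pos.mpr hab)).mpr hsx

lemma mapsTo_vuStep_Icc (ha : 0 ≤ a) (hab : a < b) (hs : 0 ≤ s) (hsb : 2 * s * b ≤ b - a) :
    MapsTo (vuStep a b s) (Icc ((a + b) / 2) b) (Icc ((a + b) / 2) b) := by
  rintro x ⟨hmx, hxb⟩
  have hsx : 2 * s * x ≤ b - a := le_trans (by gcongr) hsb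
  exact ⟨midpoint_le_vuStep hab hmx hsx,
    (vuStep_le_self hab hs (by linarith) hmx).trans hxb⟩

end

theorem vu_threshold_bounds
    (a b s : ℝ) (ha : 0 ≤ a) (hab : a < b) (hs : 0 < s)
    (hsb : 2 * s * b ≤ b - a) (θ : ℕ → ℝ) (hθ1 : θ 1 = b)
    (hrec : ∀ k, 1 ≤ k → θ (k + 1) =
      ((θ k - a) * θ k * (1 - s) + (b - θ k) * θ k * (1 + s)) / (b - a)) :
    ∀ k, 1 ≤ k → (a + b) / 2 ≤ θ k ∧ θ k ≤ b := by
  intro k hk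
  induction k, hk using Nat.le_induction with
  | base => exact ⟨by rw [hθ1]; linarith, hθ1.le⟩
  | succ n hn ih =>
    rw [hrec n hn]
    exact mapsTo_vuStep_Icc ha hab hs.le hsb ih
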